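/- Let φ be extended ℂ-linearly to F̂_ℂ. Then: (1) φ ∘ π^{(II)} = π^{(I)} ∘ φ and φ ∘ π^{(I)} = π^{(II)} ∘ φ, where π^{(I)} is the projection of F̂_ℂ onto span_ℂ{ε_1,…,ε_l} along ℂδ ⊕ ℂΛ_0^{(I)} and π^{(II)} is the projection onto span_ℂ{ε_1^{(II)},…,ε_l^{(II)}} along ℂδ ⊕ ℂΛ_0^{(II)}; (2) φ maps the domain 𝒴 = {v ∈ F̂_ℂ : Re Î(v,δ) > 0} to itself, and φ^{(II)}(φ(v)) = φ^{(I)}(v) and φ^{(I)}(φ(v)) = φ^{(II)}(v) for all v ∈ 𝒴. -/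
import Mathlib


open scoped BigOperators
open Finset

noncomputable section

/-- The complexification `F̂_ℂ = ℂ^l ⊕ ℂδ ⊕ ℂγ`; `(x, d, g)` represents
`x + d·δ + g·γ`. -/
abbrev FhatC (l : ℕ) := (Fin l → ℂ) × ℂ × ℂ

/-- The ℂ-bilinear extension of `Î`. -/
def IhatC {l : ℕ} (u v : FhatC l) : ℂ :=
  (∑ i, u.1 i * v.1 i) + u.2.1 * v.2.2 + u.2.2 * v.2.1

/-- The isotropic vector `δ`. -/
def deltaC (l : ℕ) : FhatC l := (0, 1, 0)

/-- The isotropic vector `γ`. -/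
def gammaC (l : ℕ) : FhatC l := (0, 0, 1)

/-- The standard basis vector `ε_n` (1-based index `n`, for `1 ≤ n ≤ l`). -/
def epsC (l : ℕ) (n : ℕ) : FhatC l := (fun j => if (j : ℕ) = n - 1 then 1 else 0, 0, 0)

/-- `ε_n^{(II)} = −ε_{l+1−n} + (1/2)δ` (1-based index `n`). -/
def epsIIC (l : ℕ) (n : ℕ) : FhatC l := -epsC l (l + 1 - n) + (1/2 : ℂ) • deltaC l

/-- `Λ_0^{(I)} = 2γ`. -/
def Lam0IC (l : ℕ) : FhatC l := (0, 0, 2)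

/-- `Λ_0^{(II)} = γ + (1/2)(ε_1 + ⋯ + ε_l) − (l/8)δ`. -/
def Lam0IIC (l : ℕ) : FhatC l := (fun _ => 1/2, -(l : ℂ)/8, 1)

/-- The (complexified) translation `t_μ`. -/
def tmuC {l : ℕ} (μ u : FhatC l) : FhatC l :=
  u + IhatC u (deltaC l) • μ
    - (IhatC u μ + (1/2) * IhatC μ μ * IhatC u (deltaC l)) • deltaC l

/-- The ℂ-linear extension of `ζ'`: `ζ'(ε_i) = −ε_{l+1−i}`, `ζ'(δ) = δ`, `ζ'(γ) = γ`. -/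
def zetaC (l : ℕ) (v : FhatC l) : FhatC l := (fun j => -v.1 j.rev, v.2.1, v.2.2)

/-- `h = (1/2)(ε_1 + ⋯ + ε_l)`. -/
def hHalfC (l : ℕ) : FhatC l := (fun _ => 1/2, 0, 0)

/-- The ℂ-linear extension of `φ = t_h ∘ ζ'`. -/
def phiC (l : ℕ) : FhatC l → FhatC l := tmuC (hHalfC l) ∘ zetaC l

/-- `π^{(I)}`: projection onto `span_ℂ{ε_1,…,ε_l}` along `ℂδ ⊕ ℂΛ_0^{(I)}`. -/
def piI (l : ℕ) (v : FhatC l) : FhatC l := (v.1, 0, 0)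

/-- `π^{(II)}`: projection onto `span_ℂ{ε_1^{(II)},…,ε_l^{(II)}}` along
`ℂδ ⊕ ℂΛ_0^{(II)}`. -/
def piII (l : ℕ) (v : FhatC l) : FhatC l :=
  (fun j => v.1 j - v.2.2 / 2, (l : ℂ) * v.2.2 / 4 - (∑ j, v.1 j) / 2, 0)

/-- The type-I coordinate map `φ^{(I)}`. -/
def coordI (l : ℕ) (v : FhatC l) : ℂ × (Fin l → ℂ) × ℂ :=
  (-(IhatC v (deltaC l)) / (2 * (Real.pi : ℂ) * Complex.I),
   fun i => IhatC v (epsC l ((i : ℕ) + 1)) / (2 * (Real.pi : ℂ) * Complex.I),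
   IhatC v (Lam0IC l) / (2 * (2 * (Real.pi : ℂ) * Complex.I)))

/-- The type-II coordinate map `φ^{(II)}`. -/
def coordII (l : ℕ) (v : FhatC l) : ℂ × (Fin l → ℂ) × ℂ :=
  (-(IhatC v (deltaC l)) / (2 * (Real.pi : ℂ) * Complex.I),
   fun i => IhatC v (epsIIC l ((i : ℕ) + 1)) / (2 * (Real.pi : ℂ) * Complex.I),
   IhatC v (Lam0IIC l) / (2 * (Real.pi : ℂ) * Complex.I))

lemma my_sum_rev {l : ℕ} (f : Fin l → ℂ) : ∑ j : Fin l, f j.rev = ∑ j : Fin l, f j :=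
  Equiv.sum_comp (Fin.revPerm) f

lemma phiC_apply (l : ℕ) (v : FhatC l) :
    phiC l v = (fun j => -v.1 j.rev + v.2.2/2,
      v.2.1 + (∑ i, v.1 i)/2 - (l:ℂ)/8 * v.2.2, v.2.2) := by
  have h1 : ∑ j : Fin l, -v.1 j.rev * (1/2 : ℂ) = (-∑ i, v.1 i)/2 := by
    have h0 : ∑ j : Fin l, v.1 j.rev = ∑ j, v.1 j := my_sum_rev v.1
    simp only [mul_one_div]
    rw [← Finset.sum_div, Finset.sum_neg_distrib, h0, neg_div]
  have h0 : ∑ j : Fin l, v.1 j.rev = ∑ j, v.1 j := my_sum_rev v.1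
  simp only [phiC, Function.comp, tmuC, zetaC, hHalfC, IhatC, deltaC]
  refine Prod.ext ?_ (Prod.ext ?_ ?_)
  · funext j; simp [h1]; ring
  · simp [h1]
    rw [← Finset.sum_mul, h0]
    ring
  · simp

lemma Ihat_delta {l : ℕ} (u : FhatC l) : IhatC u (deltaC l) = u.2.2 := by
  simp [IhatC, deltaC]

lemma Ihat_eps {l : ℕ} (u : FhatC l) (i : Fin l) :
    IhatC u (epsC l ((i : ℕ) + 1)) = u.1 i := by
  simp only [IhatC, epsC, Nat.add_sub_cancel, mul_ite, mul_one, mul_zero]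
  have : ∀ j : Fin l, ((j : ℕ) = (i : ℕ)) = (j = i) := fun j => by
    simp [Fin.ext_iff]
  simp [this]

lemma Ihat_epsII {l : ℕ} (u : FhatC l) (i : Fin l) :
    IhatC u (epsIIC l ((i : ℕ) + 1)) = -u.1 i.rev + u.2.2 / 2 := by
  have hidx : l + 1 - ((i : ℕ) + 1) - 1 = (i.rev : ℕ) := by
    have := i.isLt
    simp only [Fin.val_rev]
    omega
  simp only [IhatC, epsIIC, epsC, deltaC, Prod.fst_add, Prod.snd_add, Prod.smul_fst,
    Prod.smul_snd, Prod.fst_neg, Prod.snd_neg, hidx]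
  have : ∀ j : Fin l, ((j : ℕ) = (i.rev : ℕ)) = (j = i.rev) := fun j => by
    simp [Fin.ext_iff]
  simp [mul_ite, mul_comm]
  have h2 : ∀ x : Fin l, ((x:ℕ) = l - ((i:ℕ)+1)) ↔ x = i.rev := fun x => by
    simp [Fin.ext_iff, Fin.val_rev]
  simp_rw [h2]
  simp [Finset.sum_ite_eq']
  ring

lemma Ihat_Lam0I {l : ℕ} (u : FhatC l) : IhatC u (Lam0IC l) = 2 * u.2.1 := by
  simp [IhatC, Lam0IC]; ring

lemma Ihat_Lam0II {l : ℕ} (u : FhatC l) :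
    IhatC u (Lam0IIC l) = (∑ i, u.1 i)/2 + u.2.1 - (l : ℂ)/8 * u.2.2 := by
  simp only [IhatC, Lam0IIC]
  rw [show (fun j : Fin l => u.1 j * (1/2 : ℂ)) = fun j => u.1 j * (1/2:ℂ) from rfl]
  rw [← Finset.sum_mul]
  ring

/-- `φ ∘ π^{(II)} = π^{(I)} ∘ φ` and `φ ∘ π^{(I)} = π^{(II)} ∘ φ`;
moreover `φ` preserves the domain `𝒴 = {v : Re Î(v,δ) > 0}` and interchanges the
two coordinate systems: `φ^{(II)}(φ(v)) = φ^{(I)}(v)` and `φ^{(I)}(φ(v)) = φ^{(II)}(v)`. -/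
theorem stmt7 (l : ℕ) (hl : 1 ≤ l) :
    (phiC l ∘ piII l = piI l ∘ phiC l) ∧
    (phiC l ∘ piI l = piII l ∘ phiC l) ∧
    (∀ v : FhatC l, 0 < (IhatC v (deltaC l)).re →
      0 < (IhatC (phiC l v) (deltaC l)).re ∧
      coordII l (phiC l v) = coordI l v ∧
      coordI l (phiC l v) = coordII l v) := by
  refine ⟨?_, ?_, ?_⟩
  · funext v
    simp only [Function.comp, phiC_apply, piII, piI]
    refine Prod.ext ?_ (Prod.ext ?_ ?_)
    · funext j; simp; ring
    · simp [Finset.sum_sub_distrib, Finset.sum_const, card_univ]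
      ring
    · rfl
  · funext v
    simp only [Function.comp, phiC_apply, piI, piII]
    refine Prod.ext ?_ (Prod.ext ?_ ?_)
    · funext j; simp
    · simp [Finset.sum_add_distrib, Finset.sum_const, card_univ, my_sum_rev]
      ring
    · rfl
  · intro v hv
    have hδ : IhatC (phiC l v) (deltaC l) = IhatC v (deltaC l) := by
      rw [Ihat_delta, Ihat_delta, phiC_apply]
    refine ⟨by rw [hδ]; exact hv, ?_, ?_⟩
    · simp only [coordII, coordI, hδ, Prod.mk.injEq]
      refine ⟨trivial, ?_, ?_⟩
      · funext i
        simp only [Ihat_epsII, Ihat_eps, phiC_apply, Fin.rev_rev]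
        ring_nf
      · simp only [Ihat_Lam0II, Ihat_Lam0I, phiC_apply]
        rw [Finset.sum_add_distrib, Finset.sum_neg_distrib, my_sum_rev v.1,
          Finset.sum_const, card_univ]
        simp
        ring
    · simp only [coordI, coordII, hδ, Prod.mk.injEq]
      refine ⟨trivial, ?_, ?_⟩
      · funext i
        simp only [Ihat_eps, Ihat_epsII, phiC_apply]
      · simp only [Ihat_Lam0I, Ihat_Lam0II, phiC_apply]
        ring
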